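/- For coplanar interpolation points with common unit normal n and Gaussian radial basis functions, the rescaled interpolant is invariant under translations along n: Π̂_f(x + s n) = Π̂_f(x) for all s ∈ ℝ and all x where the denominators are nonzero. -/

import Mathlib

/-!
Translating `x` by `s • n` changes every squared distance `‖x - ξ m‖²` by the same amount
`2 s ⟪x - ξ₀, n⟫ + s²`, because `⟪x - ξ m, n⟫` does not depend on `m` for coplanar centres.
For the Gaussian this is a common multiplicative factor of all basis functions, and it cancels
in the quotient `Π_f / Π_1`.
-/

open Finset

section Translation

variable {E : Type*} [NormedAddCommGroup E] [InnerProductSpace ℝ E]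

theorem inner_sub_eq_of_inner_sub_eq_zero {x y z n : E} (h : inner ℝ (y - z) n = (0 : ℝ)) :
    inner ℝ (x - y) n = (inner ℝ (x - z) n : ℝ) := by
  rw [← add_zero (inner ℝ (x - y) n : ℝ), ← h, ← inner_add_left, sub_add_sub_cancel]

theorem dist_add_smul_sq_of_norm_eq_one {n : E} (hn : ‖n‖ = 1) (x y : E) (s : ℝ) :
    dist (x + s • n) y ^ 2 = dist x y ^ 2 + (2 * s * inner ℝ (x - y) n + s ^ 2) := by
  rw [dist_eq_norm, dist_eq_norm, add_sub_right_comm, norm_add_sq_real, real_inner_smul_right,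
    norm_smul, Real.norm_eq_abs, hn, mul_one, sq_abs]
  ring

theorem exp_neg_dist_add_smul_sq_div {n : E} (hn : ‖n‖ = 1) (x y : E) (s ε : ℝ) :
    Real.exp (-(dist (x + s • n) y ^ 2) / ε ^ 2) =
      Real.exp (-(2 * s * inner ℝ (x - y) n + s ^ 2) / ε ^ 2) *
        Real.exp (-(dist x y ^ 2) / ε ^ 2) := by
  rw [dist_add_smul_sq_of_norm_eq_one hn, ← Real.exp_add]
  congr 1
  ring

end Translation

theorem sum_mul_div_sum_mul_of_eq_const_mul {ι : Type*} (s : Finset ι) {u v g h : ι → ℝ} {c : ℝ}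
    (hc : c ≠ 0) (hg : ∀ i, g i = c * h i) :
    (∑ i ∈ s, u i * g i) / (∑ i ∈ s, v i * g i) = (∑ i ∈ s, u i * h i) / (∑ i ∈ s, v i * h i) := by
  simp only [hg, mul_left_comm _ c, ← mul_sum]
  exact mul_div_mul_left _ _ hc

theorem stmt_2_general {d M : ℕ} [NeZero M] (ξ : Fin M → EuclideanSpace ℝ (Fin d))
    (n : EuclideanSpace ℝ (Fin d)) (hn : ‖n‖ = 1)
    (hplane : ∀ m, inner ℝ (ξ m - ξ 0) n = (0 : ℝ))
    (ε : ℝ)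
    (φ : ℝ → ℝ) (hφ : ∀ r, φ r = Real.exp (-(r ^ 2) / ε ^ 2))
    (Φ : Matrix (Fin M) (Fin M) ℝ)
    (f : Fin M → ℝ) (s : ℝ) (x : EuclideanSpace ℝ (Fin d)) :
    (∑ m, Φ⁻¹.mulVec f m * φ (dist (x + s • n) (ξ m))) /
        (∑ m, Φ⁻¹.mulVec (fun _ => (1 : ℝ)) m * φ (dist (x + s • n) (ξ m))) =
      (∑ m, Φ⁻¹.mulVec f m * φ (dist x (ξ m))) /
        (∑ m, Φ⁻¹.mulVec (fun _ => (1 : ℝ)) m * φ (dist x (ξ m))) := by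
  refine sum_mul_div_sum_mul_of_eq_const_mul _
    (Real.exp_ne_zero (-(2 * s * inner ℝ (x - ξ 0) n + s ^ 2) / ε ^ 2)) fun m => ?_
  rw [hφ, hφ, exp_neg_dist_add_smul_sq_div hn,
    inner_sub_eq_of_inner_sub_eq_zero (z := ξ 0) (hplane m)]

/-- For coplanar interpolation points with common unit normal `n` and Gaussian RBFs,
the rescaled interpolant is invariant under translations along `n`. -/
theorem stmt_2 {d M : ℕ} [NeZero M] (ξ : Fin M → EuclideanSpace ℝ (Fin d))
    (n : EuclideanSpace ℝ (Fin d)) (hn : ‖n‖ = 1)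
    (hplane : ∀ m, inner ℝ (ξ m - ξ 0) n = (0 : ℝ))
    (ε : ℝ) (hε : 0 < ε)
    (φ : ℝ → ℝ) (hφ : ∀ r, φ r = Real.exp (-(r ^ 2) / ε ^ 2))
    (Φ : Matrix (Fin M) (Fin M) ℝ)
    (hΦ : ∀ i j, Φ i j = φ (dist (ξ i) (ξ j)))
    (hinv : IsUnit Φ)
    (f : Fin M → ℝ) (s : ℝ) (x : EuclideanSpace ℝ (Fin d))
    (hden : (∑ m, Φ⁻¹.mulVec (fun _ => (1 : ℝ)) m * φ (dist x (ξ m))) ≠ 0)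
    (hden' : (∑ m, Φ⁻¹.mulVec (fun _ => (1 : ℝ)) m * φ (dist (x + s • n) (ξ m))) ≠ 0) :
    (∑ m, Φ⁻¹.mulVec f m * φ (dist (x + s • n) (ξ m))) /
        (∑ m, Φ⁻¹.mulVec (fun _ => (1 : ℝ)) m * φ (dist (x + s • n) (ξ m))) =
      (∑ m, Φ⁻¹.mulVec f m * φ (dist x (ξ m))) /
        (∑ m, Φ⁻¹.mulVec (fun _ => (1 : ℝ)) m * φ (dist x (ξ m))) :=
  stmt_2_general ξ n hn hplane ε φ hφ Φ f s x
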